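/- The independence number of Q(n,3,3,2) is Θ(n·2^n): it is at most |F_3^n| / ω where ω ≥ C(n-1,2) is witnessed by the clique J = {(1ij|∅) : {i,j} ⊆ [n]\{1\}} (all 3-faces with stars containing coordinate 1 and all location bits 0), and it is at least (n/9)·2^{n-6} by Brooks' theorem. -/

import Mathlib

/-- The dimension of a face of the `n`-cube: a face is an element of
`{0,1,*}^n ≅ (Fin n → Option Bool)` with `none` playing the role of `*`,
and its dimension is the number of `*` entries. -/
def faceDim {n : ℕ} (F : Fin n → Option Bool) : ℕ :=
  (Finset.univ.filter (fun p => F p = none)).card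

/-- The set of star positions of a face. -/
def stars {n : ℕ} (F : Fin n → Option Bool) : Finset (Fin n) :=
  Finset.univ.filter (fun p => F p = none)

/-- Two faces are compatible (have nonempty intersection in the face lattice)
iff they agree on every coordinate which is fixed in both. -/
def compatible {n : ℕ} (D S : Fin n → Option Bool) : Prop :=
  ∀ p b b', D p = some b → S p = some b' → b = b'

/-- `dim (D ∩ S) ≥ q` in the face lattice of the `n`-cube (for `q : ℕ`). -/
def meets {n : ℕ} (q : ℕ) (D S : Fin n → Option Bool) : Prop :=
  compatible D S ∧ q ≤ (stars D ∩ stars S).card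

/-- The graph `Q(n,k,p,q)`: vertices are the `k`-faces of the `n`-cube, and two
distinct `k`-faces `D`, `F` are adjacent iff there is a `p`-face `S` with
`dim (D ∩ S) ≥ q` and `dim (F ∩ S) ≥ q`. -/
def Q (n k p q : ℕ) : SimpleGraph {D : Fin n → Option Bool // faceDim D = k} where
  Adj D F := D ≠ F ∧
    ∃ S : Fin n → Option Bool, faceDim S = p ∧ meets q D.1 S ∧ meets q F.1 S
  symm := by
    constructor
    rintro D F ⟨h, S, hS, h1, h2⟩
    exact ⟨Ne.symm h, S, hS, h2, h1⟩
  loopless := by constructor; rintro D ⟨h, -⟩; exact h rfl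

/-!
Upper bound: call a pair `(a, w)` of a star direction `a` and a vertex `w` of a face a flag of
that face. Two distinct 3-faces sharing a flag are adjacent: the 3-face through `w` spanned by
`a`, a star of the first face missing from the second and a further star of the second meets
both in a square. So the flag sets of an independent set are disjoint; each 3-face has
`3 · 2³` flags and there are `n · 2ⁿ` flags in all. The same construction shows that `J` is a
clique.

Lower bound: cut the coordinates other than the last one into `(n - 1) / 3` disjoint blocks of
three and take the faces starred along a block with an even number of ones. A 3-face cannot meet
two faces with disjoint stars in squares, and it bridges two faces with the same stars only if
they differ in exactly one coordinate, which changes the parity. Fixing the last coordinate by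
parity gives `2 ^ (n - 4)` such faces per block.
-/

open Finset

variable {n : ℕ}

lemma mem_stars {D : Fin n → Option Bool} {p : Fin n} : p ∈ stars D ↔ D p = none := by
  simp [stars]

lemma faceDim_eq_card_stars (D : Fin n → Option Bool) : faceDim D = #(stars D) := rfl

lemma card_stars {k : ℕ} (D : {D : Fin n → Option Bool // faceDim D = k}) : #(stars D.1) = k :=
  D.2

/-- The vertex `w` of the cube lies on the face `D`. -/
def HasVertex (D : Fin n → Option Bool) (w : Fin n → Bool) : Prop :=
  ∀ p, D p = none ∨ D p = some (w p)

instance (D : Fin n → Option Bool) : DecidablePred (HasVertex D) :=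
  fun _ => inferInstanceAs (Decidable (∀ _, _))

/-- The face through the vertex `w` spanned by the coordinate directions in `s`. -/
def faceOf (s : Finset (Fin n)) (w : Fin n → Bool) : Fin n → Option Bool :=
  fun p => if p ∈ s then none else some (w p)

@[simp]
lemma stars_faceOf (s : Finset (Fin n)) (w : Fin n → Bool) : stars (faceOf s w) = s := by
  ext p
  by_cases hp : p ∈ s <;> simp [mem_stars, faceOf, hp]

lemma faceDim_faceOf (s : Finset (Fin n)) (w : Fin n → Bool) : faceDim (faceOf s w) = #s := by
  rw [faceDim_eq_card_stars, stars_faceOf]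

lemma hasVertex_faceOf (s : Finset (Fin n)) (w : Fin n → Bool) : HasVertex (faceOf s w) w := by
  intro p
  by_cases hp : p ∈ s <;> simp [faceOf, hp]

lemma HasVertex.eq_faceOf {D : Fin n → Option Bool} {w : Fin n → Bool} (h : HasVertex D w) :
    D = faceOf (stars D) w := by
  funext p
  rcases h p with hp | hp <;> simp [faceOf, mem_stars, hp]

lemma HasVertex.compatible {D S : Fin n → Option Bool} {w : Fin n → Bool} (hD : HasVertex D w)
    (hS : HasVertex S w) : compatible D S := by
  intro p b b' hb hb'
  rcases hD p with h | h <;> rcases hS p with h' | h' <;> simp_all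

lemma card_filter_hasVertex (D : Fin n → Option Bool) :
    #{w | HasVertex D w} = 2 ^ faceDim D := by
  have : ({w | HasVertex D w} : Finset (Fin n → Bool)) =
      Fintype.piFinset fun p => if p ∈ stars D then univ else {(D p).getD false} := by
    ext w
    rw [mem_filter_univ, Fintype.mem_piFinset]
    simp only [HasVertex, mem_stars]
    refine forall_congr' fun p => ?_
    rcases D p with _ | b
    · simp
    · simp [@eq_comm _ b]
  calc _ = ∏ p, if p ∈ stars D then 2 else 1 := by
        rw [this, Fintype.card_piFinset]
        exact prod_congr rfl fun p _ => by split_ifs <;> simp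
    _ = 2 ^ faceDim D := by rw [prod_ite_mem, univ_inter, prod_const, faceDim_eq_card_stars]

lemma adj_of_hasVertex_of_mem_stars {D F : {D : Fin n → Option Bool // faceDim D = 3}}
    (hne : D ≠ F) {w : Fin n → Bool} (hDw : HasVertex D.1 w) (hFw : HasVertex F.1 w)
    {a : Fin n} (hDa : a ∈ stars D.1) (hFa : a ∈ stars F.1) : (Q n 3 3 2).Adj D F := by
  obtain ⟨i, hiD, hiF⟩ : ∃ i ∈ stars D.1, i ∉ stars F.1 := by
    by_contra! h
    refine hne (Subtype.ext ?_)
    rw [hDw.eq_faceOf, hFw.eq_faceOf,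
      eq_of_subset_of_card_le h (by rw [card_stars, card_stars])]
  obtain ⟨k, hkF, hka⟩ := exists_mem_ne (s := stars F.1) (by rw [card_stars]; norm_num) a
  have hai : a ≠ i := fun h => hiF (h ▸ hFa)
  have hik : i ≠ k := fun h => hiF (h ▸ hkF)
  refine ⟨hne, faceOf {a, i, k} w, ?_, ⟨hDw.compatible (hasVertex_faceOf _ w), ?_⟩,
    ⟨hFw.compatible (hasVertex_faceOf _ w), ?_⟩⟩
  · rw [faceDim_faceOf, card_eq_three]
    exact ⟨a, i, k, hai, hka.symm, hik, rfl⟩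
  · rw [stars_faceOf]
    exact one_lt_card.2 ⟨a, by simp [hDa], i, by simp [hiD], hai⟩
  · rw [stars_faceOf]
    exact one_lt_card.2 ⟨a, by simp [hFa], k, by simp [hkF], hka.symm⟩

def flags (D : Fin n → Option Bool) : Finset (Fin n × (Fin n → Bool)) :=
  stars D ×ˢ ({w | HasVertex D w} : Finset (Fin n → Bool))

lemma card_flags (D : Fin n → Option Bool) : #(flags D) = faceDim D * 2 ^ faceDim D := by
  rw [flags, card_product, card_filter_hasVertex, faceDim_eq_card_stars]

lemma disjoint_flags_of_not_adj {D F : {D : Fin n → Option Bool // faceDim D = 3}} (hne : D ≠ F)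
    (h : ¬ (Q n 3 3 2).Adj D F) : Disjoint (flags D.1) (flags F.1) := by
  refine disjoint_left.2 fun ⟨a, w⟩ hD hF => h ?_
  simp only [flags, mem_product, mem_filter_univ] at hD hF
  exact adj_of_hasVertex_of_mem_stars hne hD.2 hF.2 hD.1 hF.1

lemma card_mul_le_of_independent (I : Set {D : Fin n → Option Bool // faceDim D = 3})
    (hI : ∀ D ∈ I, ∀ F ∈ I, ¬ (Q n 3 3 2).Adj D F) : Nat.card I * 24 ≤ n * 2 ^ n := by
  set T := (Set.toFinite I).toFinset
  have hdisj : (T : Set {D : Fin n → Option Bool // faceDim D = 3}).PairwiseDisjoint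
      fun D => flags D.1 := fun D hD F hF hne =>
    disjoint_flags_of_not_adj hne (hI D (by simpa [T] using hD) F (by simpa [T] using hF))
  calc Nat.card I * 24 = #(T.biUnion fun D => flags D.1) := by
        rw [card_biUnion hdisj, sum_congr rfl fun D _ => by rw [card_flags, D.2], sum_const,
          smul_eq_mul, Nat.card_coe_set_eq, Set.ncard_eq_toFinset_card I]
        rfl
    _ ≤ n * 2 ^ n := by
        simpa using card_le_univ (T.biUnion fun D => flags D.1)

lemma mul_choose_le_of_mul_le {n m : ℕ} (hn : 3 ≤ n) (h : m * 24 ≤ n * 2 ^ n) :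
    m * (n - 1).choose 2 ≤ n.choose 3 * 2 ^ (n - 3) := by
  have hchoose : n * (n - 1).choose 2 = n.choose 3 * 3 := by
    obtain ⟨k, rfl⟩ : ∃ k, n = k + 1 := ⟨n - 1, by omega⟩
    exact Nat.add_one_mul_choose_eq k 2
  have hpow : 2 ^ n = 2 ^ (n - 3) * 2 ^ 3 := by rw [← pow_add, Nat.sub_add_cancel hn]
  refine Nat.le_of_mul_le_mul_left ?_ (show 0 < 24 by norm_num)
  calc 24 * (m * (n - 1).choose 2) = m * 24 * (n - 1).choose 2 := by ring
    _ ≤ n * 2 ^ n * (n - 1).choose 2 := Nat.mul_le_mul_right _ h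
    _ = n * (n - 1).choose 2 * 2 ^ n := by ring
    _ = 24 * (n.choose 3 * 2 ^ (n - 3)) := by rw [hchoose, hpow]; ring

def facesThroughEquiv (a : Fin n) (w : Fin n → Bool) (k : ℕ) :
    {D : {D : Fin n → Option Bool // faceDim D = k + 1} // D.1 a = none ∧ HasVertex D.1 w} ≃
      powersetCard k (univ.erase a) where
  toFun D := ⟨(stars D.1.1).erase a, mem_powersetCard.2
    ⟨erase_subset_erase _ (subset_univ _), by
      rw [card_erase_of_mem (mem_stars.2 D.2.1), card_stars, Nat.add_sub_cancel]⟩⟩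
  invFun s := ⟨⟨faceOf (insert a s) w, by
      rw [faceDim_faceOf,
        card_insert_of_notMem fun h => by simpa using (mem_powersetCard.1 s.2).1 h,
        (mem_powersetCard.1 s.2).2]⟩,
    by simp [faceOf], hasVertex_faceOf _ w⟩
  left_inv D := by
    ext1; ext1
    dsimp only
    rw [insert_erase (mem_stars.2 D.2.1), ← D.2.2.eq_faceOf]
  right_inv s := by
    ext1
    simp only [stars_faceOf]
    exact erase_insert fun h => by simpa using (mem_powersetCard.1 s.2).1 h

lemma card_facesThrough (a : Fin n) (w : Fin n → Bool) (k : ℕ) :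
    Nat.card {D : {D : Fin n → Option Bool // faceDim D = k + 1} //
      D.1 a = none ∧ HasVertex D.1 w} = (n - 1).choose k := by
  rw [Nat.card_congr (facesThroughEquiv a w k), Nat.card_eq_fintype_card, Fintype.card_coe,
    card_powersetCard, card_erase_of_mem (mem_univ a), card_univ, Fintype.card_fin]

section IndependentSets

variable {k p q : ℕ}

lemma not_adj_of_disjoint_stars (hpq : p < 2 * q)
    {D F : {D : Fin n → Option Bool // faceDim D = k}} (h : Disjoint (stars D.1) (stars F.1)) :
    ¬ (Q n k p q).Adj D F := by
  rintro ⟨-, S, hS, ⟨-, hD⟩, ⟨-, hF⟩⟩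
  have hdisj : Disjoint (stars D.1 ∩ stars S) (stars F.1 ∩ stars S) :=
    h.mono Finset.inter_subset_left Finset.inter_subset_left
  refine absurd hpq (not_lt.2 ?_)
  calc 2 * q ≤ #(stars D.1 ∩ stars S) + #(stars F.1 ∩ stars S) := by omega
    _ = #((stars D.1 ∩ stars S) ∪ (stars F.1 ∩ stars S)) :=
        (card_union_of_disjoint hdisj).symm
    _ ≤ p := by
        rw [← hS, faceDim_eq_card_stars]
        exact card_le_card (union_subset Finset.inter_subset_right Finset.inter_subset_right)

/-- Where two faces with the same stars differ, a face `S` meeting both must be starred, and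
these directions are not among the `q` stars that `S` shares with `D`. -/
lemma card_ne_add_le_of_adj {D F : {D : Fin n → Option Bool // faceDim D = k}}
    (h : stars D.1 = stars F.1) (hadj : (Q n k p q).Adj D F) :
    #{x | D.1 x ≠ F.1 x} + q ≤ p := by
  obtain ⟨-, S, hS, ⟨hDS, hq⟩, ⟨hFS, -⟩⟩ := hadj
  have hsub : ({x | D.1 x ≠ F.1 x} : Finset (Fin n)) ⊆ stars S \ stars D.1 := by
    intro x hx
    rw [mem_filter_univ] at hx
    rw [mem_sdiff, mem_stars, mem_stars]
    have hiff : D.1 x = none ↔ F.1 x = none := by rw [← mem_stars, ← mem_stars, h]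
    rcases hDx : D.1 x with _ | b
    · exact absurd (hDx.trans (hiff.1 hDx).symm) hx
    rcases hFx : F.1 x with _ | b'
    · exact absurd (hiff.2 hFx) (by simp [hDx])
    refine ⟨?_, Option.some_ne_none b⟩
    rcases hSx : S x with _ | c
    · rfl
    · exact absurd (by rw [hDx, hFx, hDS x b c hDx hSx, hFS x b' c hFx hSx]) hx
  have hdisj : Disjoint (stars S \ stars D.1) (stars D.1 ∩ stars S) :=
    disjoint_sdiff_self_left.mono_right Finset.inter_subset_left
  calc #{x | D.1 x ≠ F.1 x} + q ≤ #(stars S \ stars D.1) + #(stars D.1 ∩ stars S) :=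
        add_le_add (card_le_card hsub) hq
    _ = #((stars S \ stars D.1) ∪ (stars D.1 ∩ stars S)) := (card_union_of_disjoint hdisj).symm
    _ ≤ p := by
        rw [← hS, faceDim_eq_card_stars]
        exact card_le_card (union_subset sdiff_subset Finset.inter_subset_right)

def parity (D : Fin n → Option Bool) : ZMod 2 := ∑ x, if D x = some true then 1 else 0

lemma parity_add_parity {D F : Fin n → Option Bool} (h : stars D = stars F) :
    parity D + parity F = #{x | D x ≠ F x} := by
  rw [parity, parity, ← sum_add_distrib, ← sum_boole]
  refine sum_congr rfl fun x _ => ?_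
  have hiff : D x = none ↔ F x = none := by rw [← mem_stars, ← mem_stars, h]
  rcases hDx : D x with _ | _ | _ <;> rcases hFx : F x with _ | _ | _ <;> simp_all
  decide

lemma not_adj_of_parity_eq (hpq : p ≤ q + 1) {D F : {D : Fin n → Option Bool // faceDim D = k}}
    (h : stars D.1 = stars F.1) (hpar : parity D.1 = parity F.1) : ¬ (Q n k p q).Adj D F := by
  intro hadj
  have hle := card_ne_add_le_of_adj h hadj
  obtain ⟨x, hx⟩ := Function.ne_iff.1 (Subtype.coe_ne_coe.2 hadj.1)
  have hpos : 0 < #{x | D.1 x ≠ F.1 x} := card_pos.2 ⟨x, by simpa using hx⟩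
  have hsum := parity_add_parity h
  rw [hpar, CharTwo.add_self_eq_zero, show #{x | D.1 x ≠ F.1 x} = 1 by omega] at hsum
  exact zero_ne_one hsum

def block (n j : ℕ) : Finset (Fin n) := {x | (x : ℕ) / 3 = j}

lemma card_block {j : ℕ} (h : 3 * j + 3 ≤ n) : #(block n j) = 3 := by
  have : (block n j).map Fin.valEmbedding = Ico (3 * j) (3 * j + 3) := by
    ext x
    simp only [block, mem_map, mem_filter_univ, Fin.valEmbedding_apply, mem_Ico]
    constructor
    · rintro ⟨x, hx, rfl⟩
      omega
    · intro hx
      exact ⟨⟨x, by omega⟩, by simp only; omega, rfl⟩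
  rw [← card_map Fin.valEmbedding, this, Nat.card_Ico]
  omega

lemma disjoint_block {i j : ℕ} (h : i ≠ j) : Disjoint (block n i) (block n j) := by
  simp only [block, disjoint_filter]
  omega

def parityCode (n : ℕ) : Set {D : Fin n → Option Bool // faceDim D = 3} :=
  {D | (∃ j < (n - 1) / 3, stars D.1 = block n j) ∧ parity D.1 = 0}

lemma parityCode_independent :
    ∀ D ∈ parityCode n, ∀ F ∈ parityCode n, ¬ (Q n 3 3 2).Adj D F := by
  rintro D ⟨⟨i, -, hi⟩, hD⟩ F ⟨⟨j, -, hj⟩, hF⟩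
  rcases eq_or_ne i j with rfl | hij
  · exact not_adj_of_parity_eq (by norm_num) (hi.trans hj.symm) (hD.trans hF.symm)
  · exact not_adj_of_disjoint_stars (by norm_num) (hi ▸ hj ▸ disjoint_block hij)

end IndependentSets

lemma card_filter_stars_eq (s : Finset (Fin n)) :
    #{D : Fin n → Option Bool | stars D = s} = 2 ^ #sᶜ := by
  have : ({D | stars D = s} : Finset (Fin n → Option Bool)) =
      Fintype.piFinset fun x => if x ∈ sᶜ then {some false, some true} else {none} := by
    ext D
    rw [mem_filter_univ, Fintype.mem_piFinset, Finset.ext_iff]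
    refine forall_congr' fun x => ?_
    rw [mem_stars]
    by_cases hx : x ∈ s <;> rcases D x with _ | _ | _ <;> simp [hx]
  calc _ = ∏ x, if x ∈ sᶜ then 2 else 1 := by
        rw [this, Fintype.card_piFinset]
        exact prod_congr rfl fun x _ => by split_ifs <;> rfl
    _ = 2 ^ #sᶜ := by rw [prod_ite_mem, univ_inter, prod_const]

lemma parity_update_of_eq_none {D : Fin n → Option Bool} {x : Fin n} (h : D x = none) (b : Bool) :
    parity (Function.update D x (some b)) = parity D + if b then 1 else 0 := by
  rw [parity, parity, ← add_sum_erase _ _ (mem_univ x), ← add_sum_erase _ _ (mem_univ x),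
    Function.update_self, h,
    sum_congr rfl fun y hy => by rw [Function.update_of_ne (ne_of_mem_erase hy)]]
  simp only [reduceCtorEq, if_false, zero_add, Option.some.injEq]
  exact add_comm _ _

/-- Fixes the free coordinate `x` so that the parity becomes `0`. -/
def fixParity (x : Fin n) (D : Fin n → Option Bool) : Fin n → Option Bool :=
  Function.update D x (some (decide (parity D = 1)))

lemma parity_fixParity {D : Fin n → Option Bool} {x : Fin n} (h : D x = none) :
    parity (fixParity x D) = 0 := by
  rw [fixParity, parity_update_of_eq_none h]
  generalize parity D = c
  fin_cases c <;> decide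

lemma stars_fixParity (x : Fin n) (D : Fin n → Option Bool) :
    stars (fixParity x D) = (stars D).erase x := by
  ext y
  rcases eq_or_ne y x with rfl | hy <;> simp [fixParity, mem_stars, *]

lemma fixParity_injOn (x : Fin n) : Set.InjOn (fixParity x) {D | D x = none} := by
  intro D hD F hF h
  rw [← Function.update_eq_self x D, ← Function.update_eq_self x F, hD, hF]
  simpa [fixParity, Function.update_idem] using congrArg (Function.update · x none) h

lemma fixParity_mem_parityCode {j : ℕ} (hj : j < (n - 1) / 3) {D : Fin n → Option Bool}
    (hD : stars D = insert ⟨n - 1, by omega⟩ (block n j)) :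
    fixParity ⟨n - 1, by omega⟩ D ∈ Subtype.val '' parityCode n := by
  have hlast : (⟨n - 1, by omega⟩ : Fin n) ∉ block n j := by simp [block]; omega
  have hstars : stars (fixParity ⟨n - 1, by omega⟩ D) = block n j := by
    rw [stars_fixParity, hD, erase_insert hlast]
  have hdim : faceDim (fixParity ⟨n - 1, by omega⟩ D) = 3 := by
    rw [faceDim_eq_card_stars, hstars, card_block (by omega)]
  have hpar : parity (fixParity ⟨n - 1, by omega⟩ D) = 0 :=
    parity_fixParity (mem_stars.1 (hD ▸ mem_insert_self _ _))
  exact ⟨⟨_, hdim⟩, ⟨⟨j, hj, hstars⟩, hpar⟩, rfl⟩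

lemma card_biUnion_filter_stars_eq_insert_block (hn : 5 ≤ n) :
    #((range ((n - 1) / 3)).biUnion fun j =>
        ({D | stars D = insert ⟨n - 1, by omega⟩ (block n j)} :
          Finset (Fin n → Option Bool))) =
      (n - 1) / 3 * 2 ^ (n - 4) := by
  have hlast : ∀ j < (n - 1) / 3, (⟨n - 1, by omega⟩ : Fin n) ∉ block n j := fun j hj => by
    simp [block]; omega
  rw [card_biUnion, sum_congr rfl (g := fun _ => 2 ^ (n - 4)), sum_const, card_range, smul_eq_mul]
  · intro j hj
    rw [mem_range] at hj
    rw [card_filter_stars_eq, card_compl, Fintype.card_fin, card_insert_of_notMem (hlast j hj),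
      card_block (by omega)]
  · intro i hi j _ hij
    rw [mem_coe, mem_range] at hi
    refine disjoint_filter.2 fun D _ hDi hDj => hij ?_
    have h3i : (⟨3 * i, by omega⟩ : Fin n) ∈ insert ⟨n - 1, by omega⟩ (block n j) := by
      rw [← hDj, hDi]
      simp [block]
    simp [block] at h3i
    omega

lemma card_parityCode_ge (hn : 5 ≤ n) :
    (n - 1) / 3 * 2 ^ (n - 4) ≤ Nat.card (parityCode n) := by
  set last : Fin n := ⟨n - 1, by omega⟩
  set T := (range ((n - 1) / 3)).biUnion
    fun j => ({D | stars D = insert last (block n j)} : Finset (Fin n → Option Bool))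
  have hsub :
      (T.image (fixParity last) : Set (Fin n → Option Bool)) ⊆ Subtype.val '' parityCode n := by
    intro D hD
    simp only [coe_image, Set.mem_image, mem_coe, T, mem_biUnion, mem_range, mem_filter_univ] at hD
    obtain ⟨G, ⟨j, hj, hG⟩, rfl⟩ := hD
    exact fixParity_mem_parityCode hj hG
  have hinj : Set.InjOn (fixParity last) T := (fixParity_injOn last).mono fun G hG => by
    simp only [T, mem_coe, mem_biUnion, mem_filter_univ] at hG
    obtain ⟨j, -, hG⟩ := hG
    exact mem_stars.1 (hG ▸ mem_insert_self _ _)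
  calc (n - 1) / 3 * 2 ^ (n - 4) = #(T.image (fixParity last)) := by
        rw [card_image_of_injOn hinj, card_biUnion_filter_stars_eq_insert_block hn]
    _ ≤ (Subtype.val '' parityCode n).ncard := by
        rw [← Set.ncard_coe_finset]
        exact Set.ncard_le_ncard hsub (Set.toFinite _)
    _ = Nat.card (parityCode n) := Set.ncard_image_of_injective _ Subtype.val_injective

lemma div_nine_mul_rpow_le (hn : 5 ≤ n) :
    (n : ℝ) / 9 * (2 : ℝ) ^ ((n : ℝ) - 6) ≤ ((n - 1) / 3 * 2 ^ (n - 4) : ℕ) := by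
  have hK : (n : ℝ) ≤ 36 * ((n - 1) / 3 : ℕ) := by
    exact_mod_cast (by omega : n ≤ 36 * ((n - 1) / 3))
  have hpow : (2 : ℝ) ^ ((n : ℝ) - 6) = 2 ^ (n - 4) / 4 := by
    rw [show (n : ℝ) - 6 = ((n - 4 : ℕ) : ℝ) - 2 by
        push_cast [Nat.cast_sub (by omega : 4 ≤ n)]; ring,
      Real.rpow_sub (by norm_num), Real.rpow_natCast]
    norm_num
  have hpos : (0 : ℝ) < 2 ^ (n - 4) := by positivity
  rw [hpow]
  push_cast
  nlinarith

/-- The independence number of `Q(n,3,3,2)` is `Θ(n·2^n)` (for `n ≥ 5`):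
the set `J = {(1ij|∅)}` of 3-faces whose stars contain the first coordinate
and whose location bits are all 0 is a clique of size `C(n-1,2)`; hence by
vertex-transitivity every independent set `I` satisfies
`|I|·C(n-1,2) ≤ |F_3^n| = C(n,3)·2^{n-3}`; and by Brooks' theorem there is an
independent set of size at least `(n/9)·2^{n-6}`. -/
theorem stmt_17 (n : ℕ) (hn : 5 ≤ n) :
    (∀ D F : {D : Fin n → Option Bool // faceDim D = 3},
      (D.1 ⟨0, by omega⟩ = none ∧ ∀ p, D.1 p = none ∨ D.1 p = some false) →
      (F.1 ⟨0, by omega⟩ = none ∧ ∀ p, F.1 p = none ∨ F.1 p = some false) →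
      D ≠ F → (Q n 3 3 2).Adj D F) ∧
    Nat.card {D : {D : Fin n → Option Bool // faceDim D = 3} //
        D.1 ⟨0, by omega⟩ = none ∧ ∀ p, D.1 p = none ∨ D.1 p = some false} =
      (n - 1).choose 2 ∧
    (∀ I : Set {D : Fin n → Option Bool // faceDim D = 3},
      (∀ D ∈ I, ∀ F ∈ I, ¬ (Q n 3 3 2).Adj D F) →
      Nat.card I * (n - 1).choose 2 ≤ n.choose 3 * 2 ^ (n - 3)) ∧
    (∃ I : Set {D : Fin n → Option Bool // faceDim D = 3},
      (∀ D ∈ I, ∀ F ∈ I, ¬ (Q n 3 3 2).Adj D F) ∧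
      (n : ℝ) / 9 * (2 : ℝ) ^ ((n : ℝ) - 6) ≤ (Nat.card I : ℝ)) :=
  ⟨fun _ _ hD hF hne =>
      adj_of_hasVertex_of_mem_stars hne hD.2 hF.2 (mem_stars.2 hD.1) (mem_stars.2 hF.1),
    card_facesThrough (n := n) ⟨0, by omega⟩ (fun _ => false) 2,
    fun I hI => mul_choose_le_of_mul_le (by omega) (card_mul_le_of_independent I hI),
    parityCode n, parityCode_independent,
    (div_nine_mul_rpow_le hn).trans (by exact_mod_cast card_parityCode_ge hn)⟩
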